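/- Let ξ: ℝ → ℝ be a nonconstant C² solution of ξ'' + β·ξ' - sin(2ξ) = 0 with β > 0 and ξ(s) → mπ, ξ'(s) → 0 as s → -∞. Then for all s ∈ ℝ, ξ(s) ≠ (m+1)π and ξ(s) ≠ (m-1)π; moreover sin²(ξ(s)) > 0 whenever ξ(s) ≠ mπ on the trajectory after the first time ξ leaves mπ. -/

import Mathlib

/-!
Along a solution the energy `E = ξ'²/2 - sin² ξ` satisfies `E' = -β ξ'² ≤ 0`, and the limits at
`-∞` give `E → 0`, so `E ≤ 0` everywhere. If `sin ξ` vanished at some `s₀`, this would force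
`ξ'(s₀) = 0`, so `(ξ, ξ')(s₀)` would be an equilibrium of the globally Lipschitz phase-plane
system and uniqueness of solutions would make `ξ` constant. Hence a nonconstant solution never
meets a multiple of `π`.
-/

open Real Filter

noncomputable def dampedPendulumField (β : ℝ) (y : ℝ × ℝ) : ℝ × ℝ :=
  (y.2, sin (2 * y.1) - β * y.2)

theorem lipschitzWith_dampedPendulumField (β : ℝ) :
    LipschitzWith (max 1 (2 + ‖β‖₊)) (dampedPendulumField β) := by
  have hsin := lipschitzWith_sin.comp
    ((lipschitzWith_smul (2 : ℝ)).comp (LipschitzWith.prod_fst (α := ℝ) (β := ℝ)))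
  have hlin := (lipschitzWith_smul β).comp (LipschitzWith.prod_snd (α := ℝ) (β := ℝ))
  unfold dampedPendulumField
  simpa using LipschitzWith.prod_snd.prodMk (hsin.sub hlin)

noncomputable def pendulumEnergy (ξ : ℝ → ℝ) (s : ℝ) : ℝ :=
  deriv ξ s ^ 2 / 2 - sin (ξ s) ^ 2

theorem tendsto_pendulumEnergy_atBot {ξ : ℝ → ℝ} {m : ℤ}
    (hlim : Tendsto ξ atBot (nhds (m * π))) (hlim' : Tendsto (deriv ξ) atBot (nhds 0)) :
    Tendsto (pendulumEnergy ξ) atBot (nhds 0) := by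
  have hsin := (continuous_sin.tendsto _).comp hlim
  rw [sin_int_mul_pi] at hsin
  convert ((hlim'.pow 2).div_const 2).sub (hsin.pow 2) using 2 <;> simp [pendulumEnergy]

theorem pendulumEnergy_nonpos {ξ : ℝ → ℝ} (hE : Antitone (pendulumEnergy ξ))
    (h0 : Tendsto (pendulumEnergy ξ) atBot (nhds 0)) (s : ℝ) : pendulumEnergy ξ s ≤ 0 :=
  ge_of_tendsto h0 (by filter_upwards [eventually_le_atBot s] with t ht using hE ht)

section Solution

variable {β : ℝ} {ξ : ℝ → ℝ} (hξ : Differentiable ℝ ξ) (hξ' : Differentiable ℝ (deriv ξ))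
  (hode : ∀ s, deriv (deriv ξ) s = sin (2 * ξ s) - β * deriv ξ s)
include hξ hξ' hode

theorem hasDerivAt_phase (s : ℝ) :
    HasDerivAt (fun t => (ξ t, deriv ξ t)) (dampedPendulumField β (ξ s, deriv ξ s)) s := by
  simpa [dampedPendulumField, hode s] using (hξ s).hasDerivAt.prodMk (hξ' s).hasDerivAt

theorem eq_of_deriv_eq_zero_of_sin_two_mul_eq_zero {s₀ : ℝ} (hsin : sin (2 * ξ s₀) = 0)
    (hder : deriv ξ s₀ = 0) (t : ℝ) : ξ t = ξ s₀ := by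
  have hconst : ∀ t, HasDerivAt (fun _ : ℝ => (ξ s₀, (0 : ℝ)))
      (dampedPendulumField β (ξ s₀, 0)) t := fun t =>
    (hasDerivAt_const t (ξ s₀, (0 : ℝ))).congr_deriv (by ext <;> simp [dampedPendulumField, hsin])
  have := ODE_solution_unique_univ (s := fun _ => Set.univ) (t₀ := s₀)
    (fun _ => (lipschitzWith_dampedPendulumField β).lipschitzOnWith)
    (fun t => ⟨hasDerivAt_phase hξ hξ' hode t, trivial⟩) (fun t => ⟨hconst t, trivial⟩)
    (by simp [hder])
  exact congrArg Prod.fst (congrFun this t)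

theorem hasDerivAt_pendulumEnergy (s : ℝ) :
    HasDerivAt (pendulumEnergy ξ) (-(β * deriv ξ s ^ 2)) s := by
  have hkin : HasDerivAt (fun t => deriv ξ t ^ 2 / 2)
      (2 * deriv ξ s ^ 1 * deriv (deriv ξ) s / 2) s := ((hξ' s).hasDerivAt.pow 2).div_const 2
  have hpot : HasDerivAt (fun t => sin (ξ t) ^ 2)
      (2 * sin (ξ s) ^ 1 * (cos (ξ s) * deriv ξ s)) s :=
    ((hasDerivAt_sin (ξ s)).comp s (hξ s).hasDerivAt).pow 2
  refine (hkin.sub hpot).congr_deriv ?_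
  rw [hode s, sin_two_mul]
  ring

theorem antitone_pendulumEnergy (hβ : 0 ≤ β) : Antitone (pendulumEnergy ξ) :=
  antitone_of_deriv_nonpos (fun s => (hasDerivAt_pendulumEnergy hξ hξ' hode s).differentiableAt)
    fun s => by
      rw [(hasDerivAt_pendulumEnergy hξ hξ' hode s).deriv]
      linarith [mul_nonneg hβ (sq_nonneg (deriv ξ s))]

theorem sin_ne_zero_of_not_exists_const (hβ : 0 ≤ β)
    (h0 : Tendsto (pendulumEnergy ξ) atBot (nhds 0)) (hnc : ¬ ∃ c : ℝ, ∀ s, ξ s = c) (s : ℝ) :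
    sin (ξ s) ≠ 0 := by
  intro hsin
  have hE := pendulumEnergy_nonpos (antitone_pendulumEnergy hξ hξ' hode hβ) h0 s
  have hder : deriv ξ s = 0 := by
    rw [pendulumEnergy, hsin] at hE
    nlinarith [sq_nonneg (deriv ξ s)]
  have hsin2 : sin (2 * ξ s) = 0 := by rw [sin_two_mul, hsin, mul_zero, zero_mul]
  exact hnc ⟨ξ s, eq_of_deriv_eq_zero_of_sin_two_mul_eq_zero hξ hξ' hode hsin2 hder⟩

end Solution

/-- A nonconstant C² solution of ξ'' + β·ξ' - sin(2ξ) = 0 with β > 0 and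
ξ → mπ, ξ' → 0 as s → -∞ never attains (m+1)π nor (m-1)π; moreover
sin²(ξ(s)) > 0 whenever ξ(s) ≠ mπ. -/
theorem stmt_19 (β : ℝ) (hβ : 0 < β) (ξ : ℝ → ℝ) (hξ : ContDiff ℝ 2 ξ)
    (hode : ∀ s, deriv (deriv ξ) s + β * deriv ξ s - Real.sin (2 * ξ s) = 0)
    (hnc : ¬ ∃ c : ℝ, ∀ s, ξ s = c)
    (m : ℤ)
    (hlim : Tendsto ξ atBot (nhds (m * Real.pi)))
    (hlim' : Tendsto (deriv ξ) atBot (nhds 0)) :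
    (∀ s : ℝ, ξ s ≠ (m + 1) * Real.pi ∧ ξ s ≠ (m - 1) * Real.pi) ∧
    (∀ s : ℝ, ξ s ≠ m * Real.pi → 0 < (Real.sin (ξ s))^2) := by
  have hode' (s : ℝ) : deriv (deriv ξ) s = sin (2 * ξ s) - β * deriv ξ s := by
    linarith [hode s]
  have hsin : ∀ s, sin (ξ s) ≠ 0 :=
    sin_ne_zero_of_not_exists_const (hξ.differentiable two_ne_zero) hξ.differentiable_deriv_two
      hode' hβ.le (tendsto_pendulumEnergy_atBot hlim hlim') hnc
  have hne (s : ℝ) (k : ℤ) : ξ s ≠ k * π := fun hk => hsin s (by rw [hk, sin_int_mul_pi])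
  refine ⟨fun s => ⟨?_, ?_⟩, fun s _ => by positivity [hsin s]⟩
  · exact_mod_cast hne s (m + 1)
  · exact_mod_cast hne s (m - 1)
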